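/- Let F be a field, A an n×n matrix over F whose characteristic polynomial factors as f = f₁·f₂ with gcd(f₁,f₂) = 1, deg f₁ = d₁, deg f₂ = d₂. Then F^n decomposes as a direct sum V₁ ⊕ V₂ of A-invariant subspaces with dim V₁ = d₁, dim V₂ = d₂, such that the characteristic polynomial of A restricted to V_i is f_i; moreover this pair of subspaces is unique (V₁ = ker f₁(A), V₂ = ker f₂(A)). -/

import Mathlib

/-!
Cayley–Hamilton gives `(f₁ * f₂)(A) = 0`, so by coprimality `F^n = ker f₁(A) ⊕ ker f₂(A)`, and
both kernels are `A`-invariant. On `ker f₁(A)` the operator is killed by `f₁`, so over an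
algebraic closure each of its eigenvalues is a root of `f₁`; hence the characteristic
polynomial `g₁` of the restriction is coprime to `f₂`, and symmetrically `g₂` is coprime to
`f₁`. Together with `g₁ * g₂ = f₁ * f₂` and monicity this forces `gᵢ = fᵢ`.
Conversely, if `A` acts on an invariant `Wᵢ` with characteristic polynomial `fᵢ`, then
Cayley–Hamilton puts `Wᵢ` inside `ker fᵢ(A)`, and two complementary pairs nested in this way
coincide by modularity of the subspace lattice.
-/

open Polynomial

/-- The predicate: `p` is a pair of complementary `A`-invariant subspaces on which `A`
acts with characteristic polynomials `f₁` and `f₂` respectively. -/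
def IsInvariantSplitting {F : Type*} [Field F] {n : ℕ} (A : Matrix (Fin n) (Fin n) F)
    (f₁ f₂ : Polynomial F)
    (p : Submodule F (Fin n → F) × Submodule F (Fin n → F)) : Prop :=
  IsCompl p.1 p.2 ∧
  ∃ (h₁ : ∀ x ∈ p.1, A.mulVecLin x ∈ p.1) (h₂ : ∀ x ∈ p.2, A.mulVecLin x ∈ p.2),
    LinearMap.charpoly (A.mulVecLin.restrict h₁) = f₁ ∧
    LinearMap.charpoly (A.mulVecLin.restrict h₂) = f₂

theorem IsCompl.eq_of_le_of_le {α : Type*} [Lattice α] [BoundedOrder α] [IsModularLattice α]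
    {a b c d : α} (hab : IsCompl a b) (hcd : IsCompl c d) (hac : a ≤ c) (hbd : b ≤ d) :
    a = c := by
  refine le_antisymm hac ?_
  calc c = (a ⊔ b) ⊓ c := by rw [hab.sup_eq_top, top_inf_eq]
    _ = a ⊔ b ⊓ c := sup_inf_assoc_of_le b hac
    _ ≤ a ⊔ d ⊓ c := by gcongr
    _ = a := by rw [inf_comm, hcd.inf_eq_bot, sup_bot_eq]

theorem Polynomial.eq_of_mul_eq_mul_of_isCoprime {R : Type*} [CommRing R] [IsDomain R]
    {g₁ g₂ f₁ f₂ : R[X]} (hg₁ : g₁.Monic) (hf₁ : f₁.Monic) (h : g₁ * g₂ = f₁ * f₂)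
    (h₁ : IsCoprime g₁ f₂) (h₂ : IsCoprime g₂ f₁) : g₁ = f₁ :=
  eq_of_monic_of_associated hg₁ hf₁ <| associated_of_dvd_dvd
    (h₁.dvd_of_dvd_mul_right ⟨g₂, h.symm⟩)
    (h₂.symm.dvd_of_dvd_mul_right ⟨f₂, by rw [← h, mul_comm]⟩)

namespace Module.End

section CommRing

variable {R M : Type*} [CommRing R] [AddCommGroup M] [Module R M] (T : Module.End R M)

theorem aeval_restrict_apply {p : Submodule R M} (h : ∀ x ∈ p, T x ∈ p) (q : R[X]) (x : p) :
    (aeval (T.restrict h) q x : M) = aeval T q x := by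
  induction q using Polynomial.induction_on' with
  | add q r hq hr => simp [hq, hr]
  | monomial n a => simp [pow_restrict n h]

theorem mapsTo_ker_aeval (q : R[X]) :
    ∀ x ∈ LinearMap.ker (aeval T q), T x ∈ LinearMap.ker (aeval T q) := by
  intro x hx
  rw [LinearMap.mem_ker] at hx ⊢
  have hcomm : aeval T q * T = T * aeval T q := by
    simpa using ((Commute.all q X).map (aeval T)).eq
  rw [← mul_apply, hcomm, mul_apply, hx, map_zero]

theorem aeval_restrict_ker_aeval (q : R[X]) :
    aeval (T.restrict (T.mapsTo_ker_aeval q)) q = 0 :=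
  LinearMap.ext fun x => Subtype.ext <| by
    rw [aeval_restrict_apply]
    exact x.2

theorem le_ker_aeval_of_aeval_restrict_eq_zero {p : Submodule R M} (h : ∀ x ∈ p, T x ∈ p)
    {q : R[X]} (hq : aeval (T.restrict h) q = 0) : p ≤ LinearMap.ker (aeval T q) := by
  intro x hx
  rw [LinearMap.mem_ker, ← aeval_restrict_apply T h q ⟨x, hx⟩, hq]
  rfl

theorem isCompl_ker_aeval_of_isCoprime {f₁ f₂ : R[X]} (hc : IsCoprime f₁ f₂)
    (hT : aeval T (f₁ * f₂) = 0) :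
    IsCompl (LinearMap.ker (aeval T f₁)) (LinearMap.ker (aeval T f₂)) := by
  refine ⟨disjoint_ker_aeval_of_isCoprime T hc, codisjoint_iff.mpr ?_⟩
  rw [sup_ker_aeval_eq_ker_aeval_mul_of_coprime T hc, hT, LinearMap.ker_zero]

end CommRing

section Field

variable {F V : Type*} [Field F] [AddCommGroup V] [Module F V] [FiniteDimensional F V]
  (T : Module.End F V)

theorem isCoprime_charpoly_of_aeval_eq_zero {f g : F[X]} (hT : aeval T f = 0)
    (hc : IsCoprime f g) : IsCoprime T.charpoly g := by
  let K := AlgebraicClosure F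
  refine (isCoprime_iff_aeval_ne_zero_of_isAlgClosed F K _ _).mpr ?_
  intro a
  by_contra! ha
  have hev : HasEigenvalue (T.baseChange K) a := by
    rw [hasEigenvalue_iff_isRoot_charpoly, LinearMap.charpoly_baseChange, IsRoot,
      eval_map_algebraMap]
    exact ha.1
  have hf : aeval (T.baseChange K) (f.map (algebraMap F K)) = 0 := by
    rw [aeval_map_algebraMap, show T.baseChange K = baseChangeHom F K V T from rfl,
      aeval_algHom_apply, hT, map_zero]
  obtain ⟨v, hv⟩ := hev.exists_hasEigenvector
  have hfv := aeval_apply_of_hasEigenvector hv (p := f.map (algebraMap F K))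
  rw [hf, LinearMap.zero_apply, eq_comm, smul_eq_zero, eval_map_algebraMap] at hfv
  exact (aeval_ne_zero_of_isCoprime hc a).elim (· (hfv.resolve_right hv.2)) (· ha.2)

theorem charpoly_restrict_mul_charpoly_restrict {p₁ p₂ : Submodule F V} (hp : IsCompl p₁ p₂)
    (h₁ : ∀ x ∈ p₁, T x ∈ p₁) (h₂ : ∀ x ∈ p₂, T x ∈ p₂) :
    (T.restrict h₁).charpoly * (T.restrict h₂).charpoly = T.charpoly := by
  let e := Submodule.prodEquivOfIsCompl p₁ p₂ hp
  have hconj : (T.restrict h₁).prodMap (T.restrict h₂) = e.symm.conj T := by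
    refine LinearMap.ext fun x => e.injective ?_
    simp only [LinearEquiv.conj_apply, LinearMap.comp_apply, LinearEquiv.coe_coe,
      LinearEquiv.symm_symm, LinearEquiv.apply_symm_apply]
    simp [e, Submodule.coe_prodEquivOfIsCompl']
  rw [← LinearMap.charpoly_prodMap, hconj, LinearEquiv.charpoly_conj]

theorem charpoly_restrict_ker_aeval {f₁ f₂ : F[X]} (h₁ : f₁.Monic) (hc : IsCoprime f₁ f₂)
    (hT : T.charpoly = f₁ * f₂) :
    (T.restrict (T.mapsTo_ker_aeval f₁)).charpoly = f₁ := by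
  have hcompl := isCompl_ker_aeval_of_isCoprime T hc (hT ▸ T.aeval_self_charpoly)
  refine eq_of_mul_eq_mul_of_isCoprime (LinearMap.charpoly_monic _) h₁ ?_
    (isCoprime_charpoly_of_aeval_eq_zero _ (aeval_restrict_ker_aeval T f₁) hc)
    (isCoprime_charpoly_of_aeval_eq_zero _ (aeval_restrict_ker_aeval T f₂) hc.symm)
  rw [charpoly_restrict_mul_charpoly_restrict T hcompl, hT]

end Field

end Module.End

/-- If the characteristic polynomial of `A` factors as `f₁·f₂` with `f₁, f₂` monic and
coprime, then `F^n` has a unique decomposition into complementary `A`-invariant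
subspaces on which `A` acts with characteristic polynomials `f₁` and `f₂`; the unique
such pair is `(ker f₁(A), ker f₂(A))`. -/
theorem stmt11 (F : Type*) [Field F] (n : ℕ) (A : Matrix (Fin n) (Fin n) F)
    (f₁ f₂ : Polynomial F) (h₁ : f₁.Monic) (h₂ : f₂.Monic)
    (hc : IsCoprime f₁ f₂) (hf : A.charpoly = f₁ * f₂) :
    (∃! p, IsInvariantSplitting A f₁ f₂ p) ∧
    IsInvariantSplitting A f₁ f₂
      (LinearMap.ker (aeval A.mulVecLin f₁), LinearMap.ker (aeval A.mulVecLin f₂)) := by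
  set T : Module.End F (Fin n → F) := A.mulVecLin
  have hT : T.charpoly = f₁ * f₂ := by rw [Matrix.charpoly_mulVecLin, hf]
  have hcompl := T.isCompl_ker_aeval_of_isCoprime hc (hT ▸ T.aeval_self_charpoly)
  have hsplit : IsInvariantSplitting A f₁ f₂
      (LinearMap.ker (aeval T f₁), LinearMap.ker (aeval T f₂)) :=
    ⟨hcompl, T.mapsTo_ker_aeval f₁, T.mapsTo_ker_aeval f₂,
      T.charpoly_restrict_ker_aeval h₁ hc hT,
      T.charpoly_restrict_ker_aeval h₂ hc.symm (by rw [hT, mul_comm])⟩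
  refine ⟨⟨_, hsplit, ?_⟩, hsplit⟩
  rintro ⟨W₁, W₂⟩ ⟨hW, hW₁, hW₂, hχ₁, hχ₂⟩
  have hle₁ :=
    T.le_ker_aeval_of_aeval_restrict_eq_zero hW₁ (hχ₁ ▸ LinearMap.aeval_self_charpoly _)
  have hle₂ :=
    T.le_ker_aeval_of_aeval_restrict_eq_zero hW₂ (hχ₂ ▸ LinearMap.aeval_self_charpoly _)
  exact Prod.ext (hW.eq_of_le_of_le hcompl hle₁ hle₂)
    (hW.symm.eq_of_le_of_le hcompl.symm hle₂ hle₁)
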